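/- Consider the single-resource LP: maximize $\sum_x p_x \mu_x^r$ over the probability simplex subject to $\sum_x p_x \mu_x^d \ge -B/T$, where all $|\mu_x^d| \ge \delta > 0$, arm $x^0$ has $\mu_{x^0}^r = 0$ and $\mu_{x^0}^d > 0$, and $T \ge B/\delta$. Then every basic optimal solution is supported either on (i) a single arm with positive drift, (ii) the null arm $x^0$ together with an arm with negative drift, or (iii) an arm with positive drift together with an arm with negative drift. -/

import Mathlib

/-! At an extreme point `p` of the feasible set, every direction `w` supported where `p` is, with
`∑ w = 0` and either `∑ w μd = 0` or the drift constraint slack, vanishes, since `p ± t w` stays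
feasible for small `t`. Moving mass between two support arms shows that they have distinct drifts
and that the constraint is tight; a direction on three support arms orthogonal to `1` and `μd`
shows that there are at most two. With two arms the tight value `-B/T ∈ [-δ, 0]` rules out two
positive drifts, and `|μd| ≥ δ` together with distinct drifts rules out two negative ones. -/

open Filter Topology

theorem eq_zero_of_mem_extremePoints_of_eventually_add_smul_mem {E : Type*} [AddCommGroup E]
    [Module ℝ E] {A : Set E} {p w : E} (hp : p ∈ A.extremePoints ℝ)
    (h : ∀ᶠ t : ℝ in 𝓝 0, p + t • w ∈ A) : w = 0 := by
  have hneg : ∀ᶠ t : ℝ in 𝓝 0, p + (-t) • w ∈ A :=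
    (continuous_neg.tendsto' (0 : ℝ) 0 neg_zero).eventually h
  obtain ⟨t, ht, h₁, h₂⟩ : ∃ t : ℝ, t ≠ 0 ∧ p + t • w ∈ A ∧ p + (-t) • w ∈ A :=
    ((eventually_nhdsWithin_of_forall (s := {0}ᶜ) fun _ ht => ht).and
      (nhdsWithin_le_nhds (h.and hneg))).exists
  have hseg : p ∈ openSegment ℝ (p + t • w) (p + (-t) • w) :=
    ⟨1 / 2, 1 / 2, by norm_num, by norm_num, by norm_num, by module⟩
  have htw : t • w = 0 := by simpa using hp.2 h₁ h₂ hseg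
  exact (smul_eq_zero.1 htw).resolve_left ht

section
variable {ι : Type*} [Fintype ι]

def driftPolytope (μd : ι → ℝ) (c : ℝ) : Set (ι → ℝ) :=
  {p | (∀ x, 0 ≤ p x) ∧ ∑ x, p x = 1 ∧ c ≤ ∑ x, p x * μd x}

variable {μd : ι → ℝ} {c : ℝ} {p : ι → ℝ}

theorem eventually_add_smul_mem_driftPolytope {w : ι → ℝ} (hp : p ∈ driftPolytope μd c)
    (hsupp : ∀ x, p x = 0 → w x = 0) (hw : ∑ x, w x = 0)
    (hdrift : ∑ x, w x * μd x = 0 ∨ c < ∑ x, p x * μd x) :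
    ∀ᶠ t : ℝ in 𝓝 0, p + t • w ∈ driftPolytope μd c := by
  obtain ⟨hnonneg, hsum, hc⟩ := hp
  have hcoord : ∀ᶠ t : ℝ in 𝓝 0, ∀ x, 0 ≤ p x + t * w x := by
    refine eventually_all.2 fun x => ?_
    rcases (hnonneg x).eq_or_lt with hx | hx
    · exact Eventually.of_forall fun t => by simp [← hx, hsupp x hx.symm]
    · have hcont : Continuous fun t : ℝ => p x + t * w x := by fun_prop
      exact (continuousAt_const.eventually_lt hcont.continuousAt (by simpa using hx)).mono
        fun _ ht => ht.le
  have hdrift' : ∀ᶠ t : ℝ in 𝓝 0, c ≤ ∑ x, p x * μd x + t * ∑ x, w x * μd x := by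
    rcases hdrift with h | h
    · exact Eventually.of_forall fun t => by simpa [h] using hc
    · have hcont : Continuous fun t : ℝ => ∑ x, p x * μd x + t * ∑ x, w x * μd x := by
        fun_prop
      exact (continuousAt_const.eventually_lt hcont.continuousAt (by simpa using h)).mono
        fun _ ht => ht.le
  filter_upwards [hcoord, hdrift'] with t ht ht'
  simp only [driftPolytope, Set.mem_ofPred_eq, Pi.add_apply, Pi.smul_apply, smul_eq_mul,
    add_mul, mul_assoc, Finset.sum_add_distrib, ← Finset.mul_sum, hsum, hw]
  exact ⟨ht, by ring, ht'⟩

theorem eq_zero_of_mem_extremePoints_driftPolytope {w : ι → ℝ}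
    (hp : p ∈ (driftPolytope μd c).extremePoints ℝ)
    (hsupp : ∀ x, p x = 0 → w x = 0) (hw : ∑ x, w x = 0)
    (hdrift : ∑ x, w x * μd x = 0 ∨ c < ∑ x, p x * μd x) : w = 0 :=
  eq_zero_of_mem_extremePoints_of_eventually_add_smul_mem hp
    (eventually_add_smul_mem_driftPolytope hp.1 hsupp hw hdrift)

theorem drift_ne_and_eq_of_mem_extremePoints_driftPolytope
    (hp : p ∈ (driftPolytope μd c).extremePoints ℝ) {a b : ι} (hab : a ≠ b)
    (ha : p a ≠ 0) (hb : p b ≠ 0) : μd a ≠ μd b ∧ ∑ x, p x * μd x = c := by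
  classical
  have key : ¬(μd a - μd b = 0 ∨ c < ∑ x, p x * μd x) := fun h => by
    have hw := eq_zero_of_mem_extremePoints_driftPolytope (w := Pi.single a 1 - Pi.single b 1) hp
      (fun x hx => by simp [ne_of_apply_ne p (hx ▸ ha), ne_of_apply_ne p (hx ▸ hb)])
      (by simp [Finset.sum_sub_distrib])
      (by simpa [sub_mul, Finset.sum_sub_distrib, Pi.single_apply] using h)
    simpa [hab] using congr_fun hw a
  rw [not_or, not_lt] at key
  exact ⟨sub_ne_zero.1 key.1, key.2.antisymm hp.1.2.2⟩

theorem support_subset_pair_of_mem_extremePoints_driftPolytope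
    (hp : p ∈ (driftPolytope μd c).extremePoints ℝ) {a b : ι} (hab : a ≠ b)
    (ha : p a ≠ 0) (hb : p b ≠ 0) : {y | p y ≠ 0} ⊆ {a, b} := by
  classical
  intro d hd
  by_contra hdab
  simp only [Set.mem_insert_iff, Set.mem_singleton_iff, not_or] at hdab
  -- `w` restricted to `a, b, d` is the cross product of `(1, 1, 1)` and `(μd a, μd b, μd d)`
  have hw := eq_zero_of_mem_extremePoints_driftPolytope
    (w := Pi.single a (μd b - μd d) + Pi.single b (μd d - μd a) + Pi.single d (μd a - μd b)) hp
    (fun x hx => by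
      simp [ne_of_apply_ne p (hx ▸ ha), ne_of_apply_ne p (hx ▸ hb), ne_of_apply_ne p (hx ▸ hd)])
    (by simp [Finset.sum_add_distrib])
    (.inl (by simp [add_mul, Finset.sum_add_distrib, Pi.single_apply]; ring))
  have hbd : μd b - μd d = 0 := by simpa [hab, Ne.symm hdab.1] using congr_fun hw a
  exact (drift_ne_and_eq_of_mem_extremePoints_driftPolytope hp (Ne.symm hdab.2) hb hd).1
    (sub_eq_zero.1 hbd)

theorem drift_pos_neg_of_mem_extremePoints_driftPolytope
    (hp : p ∈ (driftPolytope μd c).extremePoints ℝ) {a b : ι} (hab : a ≠ b)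
    (ha : p a ≠ 0) (hb : p b ≠ 0) {δ : ℝ} (hδ : 0 < δ) (hdrift : ∀ x, δ ≤ |μd x|)
    (hδc : -δ ≤ c) (hc : c ≤ 0) : 0 < μd a ∧ μd b < 0 ∨ μd a < 0 ∧ 0 < μd b := by
  obtain ⟨hne, htight⟩ := drift_ne_and_eq_of_mem_extremePoints_driftPolytope hp hab ha hb
  have hsupp : ∀ x, x ≠ a ∧ x ≠ b → p x = 0 := fun x hx => by_contra fun hx' => by
    simpa [hx.1, hx.2] using support_subset_pair_of_mem_extremePoints_driftPolytope hp hab ha hb hx'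
  have hsum : p a + p b = 1 := by rw [← hp.1.2.1, Fintype.sum_eq_add a b hab hsupp]
  have hmix : p a * μd a + p b * μd b = c := by
    rw [← htight, Fintype.sum_eq_add a b hab fun x hx => by simp [hsupp x hx]]
  have hpa : 0 < p a := (hp.1.1 a).lt_of_ne' ha
  have hpb : 0 < p b := (hp.1.1 b).lt_of_ne' hb
  rcases le_abs'.1 (hdrift a) with hμa | hμa <;> rcases le_abs'.1 (hdrift b) with hμb | hμb
  · exfalso
    rcases hne.lt_or_gt with h | h <;> nlinarith
  · exact .inr ⟨by linarith, by linarith⟩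
  · exact .inl ⟨by linarith, by linarith⟩
  · exfalso
    nlinarith

end

theorem stmt5_general (k : ℕ) (μd : Fin k → ℝ) (x0 : Fin k) (B T δ : ℝ)
    (hδ : 0 < δ) (hdrift : ∀ x, δ ≤ |μd x|)
    (hB : 0 ≤ B) (hT : B / δ ≤ T) (hTpos : 0 < T)
    (S : Set (Fin k → ℝ))
    (hS : S = {p | (∀ x, 0 ≤ p x) ∧ ∑ x, p x = 1 ∧ -B / T ≤ ∑ x, p x * μd x})
    (p : Fin k → ℝ) (hp : p ∈ Set.extremePoints ℝ S) :
    (∃ x, 0 < μd x ∧ {y | p y ≠ 0} ⊆ ({x} : Set (Fin k))) ∨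
    (∃ x, μd x < 0 ∧ {y | p y ≠ 0} ⊆ ({x0, x} : Set (Fin k))) ∨
    (∃ xp xn, 0 < μd xp ∧ μd xn < 0 ∧ {y | p y ≠ 0} ⊆ ({xp, xn} : Set (Fin k))) := by
  subst hS
  change p ∈ (driftPolytope μd (-B / T)).extremePoints ℝ at hp
  have hc : -B / T ≤ 0 := by rw [neg_div]; exact neg_nonpos.2 (div_nonneg hB hTpos.le)
  have hδc : -δ ≤ -B / T := by
    rw [div_le_iff₀ hδ] at hT
    rw [neg_div, neg_le_neg_iff, div_le_iff₀ hTpos]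
    linarith
  obtain ⟨a, ha⟩ : ∃ a, p a ≠ 0 := by
    by_contra! h
    simpa [h] using hp.1.2.1
  by_cases hsingle : ∀ y, y ≠ a → p y = 0
  · have hsub : {y | p y ≠ 0} ⊆ {a} := fun y hy => by_contra fun hya => hy (hsingle y hya)
    rcases le_abs'.1 (hdrift a) with h | h
    · exact .inr (.inl ⟨a, by linarith, hsub.trans (Set.subset_insert x0 {a})⟩)
    · exact .inl ⟨a, by linarith, hsub⟩
  obtain ⟨b, hba, hb⟩ : ∃ b, b ≠ a ∧ p b ≠ 0 := by simpa using hsingle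
  have hsub := support_subset_pair_of_mem_extremePoints_driftPolytope hp (Ne.symm hba) ha hb
  rcases drift_pos_neg_of_mem_extremePoints_driftPolytope hp (Ne.symm hba) ha hb hδ hdrift hδc hc
    with ⟨h₁, h₂⟩ | ⟨h₁, h₂⟩
  · exact .inr (.inr ⟨a, b, h₁, h₂, hsub⟩)
  · exact .inr (.inr ⟨b, a, h₂, h₁, Set.pair_comm a b ▸ hsub⟩)

theorem stmt5 (k : ℕ) (μr μd : Fin k → ℝ) (x0 : Fin k) (B T δ : ℝ)
    (hδ : 0 < δ) (hdrift : ∀ x, δ ≤ |μd x|)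
    (hrange : ∀ x, μr x ∈ Set.Icc (0 : ℝ) 1) (hdrange : ∀ x, μd x ∈ Set.Icc (-1 : ℝ) 1)
    (hr0 : μr x0 = 0) (hd0 : 0 < μd x0)
    (hB : 0 ≤ B) (hT : B / δ ≤ T) (hTpos : 0 < T)
    (S : Set (Fin k → ℝ))
    (hS : S = {p | (∀ x, 0 ≤ p x) ∧ ∑ x, p x = 1 ∧ -B / T ≤ ∑ x, p x * μd x})
    (p : Fin k → ℝ) (hp : p ∈ Set.extremePoints ℝ S)
    (hopt : ∀ q ∈ S, ∑ x, μr x * q x ≤ ∑ x, μr x * p x) :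
    (∃ x, 0 < μd x ∧ {y | p y ≠ 0} ⊆ ({x} : Set (Fin k))) ∨
    (∃ x, μd x < 0 ∧ {y | p y ≠ 0} ⊆ ({x0, x} : Set (Fin k))) ∨
    (∃ xp xn, 0 < μd xp ∧ μd xn < 0 ∧ {y | p y ≠ 0} ⊆ ({xp, xn} : Set (Fin k))) :=
  stmt5_general k μd x0 B T δ hδ hdrift hB hT hTpos S hS p hp
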